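/- arXiv:2604.17654 — 2 statements merged into one kernel-verified Lean document; each statement's English description precedes it below -/
import Mathlib

section
/- Let Y be a finite type, π a probability mass function on Y, and f : Y^n → ℝ a function symmetric in its arguments. Suppose y₁,…,y_N are i.i.d. samples from π with N > n. Define the set score f(G) for each n-subset G of {1,…,N}, the baseline b = (1/C(N,n)) Σ over all n-subsets f(G), and for each index i the marginal advantage A(i) = Σ_{G ∋ i} (f(G) − b). Then E[Σ_{i=1}^N ∇log π(y_i) · A(i)] = (C(N,n) − C(N−1,n−1)) · E[f(Y₁,…,Y_n) · Σ_{j=1}^n ∇log π(Y_j)] where Y₁,…,Y_n are i.i.d. from π. (One may state this coordinatewise for a parametrized family of pmfs, or with ∇log π replaced by an arbitrary function g : Y → ℝ with E_π[g] = 0.) -/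
/-!
Write `E` for the expectation over i.i.d. coordinates of law `π`. By independence and
`E[g] = 0`, the term `E[g(yᵢ) f(y_G)]` vanishes when `i ∉ G`; when `i ∈ G` it is
`T = E[f(Z) g(Z_k)]` for `Z` i.i.d. of length `n`, which does not depend on `k` because `f`
only sees the multiset of samples. With `C = C(N,n)` and `c = C(N-1,n-1)`, the number of
`n`-subsets containing a given index, every index thus contributes `c (T - c T / C)`, and
`N c = n C` turns the sum over the `N` indices into `(C - c) n T`.
-/

open Finset

section IidExpect

variable {Y ι κ : Type*} [Fintype Y] [Fintype ι] [DecidableEq ι] [Fintype κ] [DecidableEq κ]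

noncomputable def iidExpect (π : Y → ℝ) (F : (ι → Y) → ℝ) : ℝ :=
  ∑ y : ι → Y, (∏ i, π (y i)) * F y

variable {π : Y → ℝ}

lemma iidExpect_sub (F H : (ι → Y) → ℝ) :
    iidExpect π (fun y => F y - H y) = iidExpect π F - iidExpect π H := by
  simp only [iidExpect, mul_sub, sum_sub_distrib]

lemma iidExpect_const_mul (a : ℝ) (F : (ι → Y) → ℝ) :
    iidExpect π (fun y => a * F y) = a * iidExpect π F := by
  simp only [iidExpect, mul_sum, mul_left_comm]

lemma iidExpect_sum {α : Type*} (s : Finset α) (F : α → (ι → Y) → ℝ) :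
    iidExpect π (fun y => ∑ a ∈ s, F a y) = ∑ a ∈ s, iidExpect π (F a) := by
  simp only [iidExpect, mul_sum]
  exact sum_comm

lemma iidExpect_comp_equiv (e : ι ≃ κ) (F : (ι → Y) → ℝ) :
    iidExpect π (fun z : κ → Y => F (z ∘ e)) = iidExpect π F := by
  refine (Fintype.sum_equiv (e.arrowCongr (Equiv.refl Y)) _ _ fun y => ?_).symm
  simp only [Equiv.arrowCongr_apply, Equiv.coe_refl, Function.comp_def, id, Equiv.symm_apply_apply]
  rw [Equiv.prod_comp e.symm fun i => π (y i)]

lemma iidExpect_one (hπ : ∑ y, π y = 1) : iidExpect π (fun _ : ι → Y => 1) = 1 := by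
  simp [iidExpect, ← Fintype.prod_sum, hπ]

lemma iidExpect_apply (hπ : ∑ y, π y = 1) (k : ι) (h : Y → ℝ) :
    iidExpect π (fun y => h (y k)) = ∑ v, π v * h v := by
  have hprod : ∀ y : ι → Y,
      (∏ i, π (y i)) * h (y k) = ∏ i, π (y i) * (if i = k then h (y i) else 1) := by
    intro y
    rw [prod_mul_distrib, Fintype.prod_ite_eq']
  calc iidExpect π (fun y => h (y k))
      = ∑ y : ι → Y, ∏ i, π (y i) * (if i = k then h (y i) else 1) := by
        simp only [iidExpect, hprod]
    _ = ∏ i, ∑ v, π v * (if i = k then h v else 1) :=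
        (Fintype.prod_sum fun i v => π v * if i = k then h v else 1).symm
    _ = ∑ v, π v * h v := by
        refine (Fintype.prod_congr _ _ fun i => ?_).trans
          (Fintype.prod_ite_eq' k fun _ => ∑ v, π v * h v)
        split_ifs <;> simp [hπ]

lemma iidExpect_mul_restrict (p : ι → Prop) [DecidablePred p]
    (F : ({i // p i} → Y) → ℝ) (H : ({i // ¬p i} → Y) → ℝ) :
    iidExpect π (fun y : ι → Y => F (fun i => y i) * H (fun i => y i))
      = iidExpect π F * iidExpect π H := by
  rw [iidExpect, iidExpect, iidExpect, Fintype.sum_mul_sum, ← Fintype.sum_prod_type']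
  refine Fintype.sum_equiv (Equiv.piEquivPiSubtypeProd p fun _ => Y) _ _ fun y => ?_
  rw [← Fintype.prod_subtype_mul_prod_subtype p]
  simp only [Equiv.piEquivPiSubtypeProd_apply]
  ring

lemma iidExpect_restrict (hπ : ∑ y, π y = 1) (p : ι → Prop) [DecidablePred p]
    (F : ({i // p i} → Y) → ℝ) :
    iidExpect π (fun y : ι → Y => F (fun i => y i)) = iidExpect π F := by
  simpa [iidExpect_one hπ] using iidExpect_mul_restrict (π := π) p F fun _ => 1

end IidExpect

lemma Finset.val_map_eq_univ_val_map {α β : Type*} (s : Finset α) (y : α → β) :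
    s.val.map y = (univ : Finset s).val.map (fun j : s => y j) := by
  rw [univ_eq_attach, attach_val]
  exact (Multiset.attach_map_val' _ _).symm

section ScoreCorrelation

variable {Y ι κ : Type*} [Fintype Y] [Fintype ι] [DecidableEq ι] [Fintype κ] [DecidableEq κ]
  {π : Y → ℝ} {g : Y → ℝ} {f : Multiset Y → ℝ}

variable (π g f) in
noncomputable def scoreCorr (k : κ) : ℝ :=
  iidExpect π (fun z : κ → Y => f (univ.val.map z) * g (z k))

lemma scoreCorr_equiv (e : ι ≃ κ) (k : ι) : scoreCorr π g f (e k) = scoreCorr π g f k := by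
  rw [scoreCorr, scoreCorr, ← iidExpect_comp_equiv e]
  refine congrArg _ (funext fun z => ?_)
  rw [← Multiset.map_univ_val_equiv e, Multiset.map_map]
  rfl

lemma scoreCorr_eq (k k' : κ) : scoreCorr π g f k = scoreCorr π g f k' := by
  simpa using (scoreCorr_equiv (π := π) (g := g) (f := f) (Equiv.swap k k') k).symm

lemma iidExpect_mul_sum_score (k : κ) :
    iidExpect π (fun z : κ → Y => f (univ.val.map z) * ∑ j, g (z j))
      = Fintype.card κ * scoreCorr π g f k := by
  simp only [mul_sum, iidExpect_sum]
  calc ∑ j, scoreCorr π g f j = ∑ _j : κ, scoreCorr π g f k :=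
        sum_congr rfl fun j _ => scoreCorr_eq j k
    _ = Fintype.card κ * scoreCorr π g f k := by simp

variable (hπ : ∑ y, π y = 1)
include hπ

lemma iidExpect_score_mul_of_notMem (hg : ∑ y, π y * g y = 0) {G : Finset ι} {i : ι}
    (hi : i ∉ G) (F : Multiset Y → ℝ) :
    iidExpect π (fun y => g (y i) * F (G.val.map y)) = 0 := by
  have := iidExpect_mul_restrict (π := π) (· ∈ G) (fun a => F (univ.val.map a))
    (fun b => g (b ⟨i, hi⟩))
  rw [iidExpect_apply hπ, hg, mul_zero] at this
  simpa only [Finset.val_map_eq_univ_val_map G, mul_comm] using this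

lemma iidExpect_score_mul_of_mem {G : Finset ι} {i : ι} (hi : i ∈ G)
    (hG : #G = Fintype.card κ) (k : κ) :
    iidExpect π (fun y => g (y i) * f (G.val.map y)) = scoreCorr π g f k := by
  let e : G ≃ κ := Fintype.equivOfCardEq (by simpa using hG)
  simp only [Finset.val_map_eq_univ_val_map G, mul_comm (g _)]
  rw [iidExpect_restrict hπ (· ∈ G) fun a => f (univ.val.map a) * g (a ⟨i, hi⟩)]
  rw [← scoreCorr_eq (e ⟨i, hi⟩) k, scoreCorr_equiv]
  -- the two sides carry different, propositionally equal, `Fintype` instances on `G`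
  unfold scoreCorr
  congr!

lemma iidExpect_score_mul_advantage (hg : ∑ y, π y * g y = 0) (s : Finset (Finset ι))
    (hs : ∀ G ∈ s, #G = Fintype.card κ) (k : κ) (i : ι) (b : ℝ) :
    iidExpect π (fun y => g (y i) * ∑ G ∈ s.filter (i ∈ ·),
        (f (G.val.map y) - b * ∑ G' ∈ s, f (G'.val.map y)))
      = #(s.filter (i ∈ ·)) * (1 - b * #(s.filter (i ∈ ·))) * scoreCorr π g f k := by
  set m : ℝ := (#(s.filter (i ∈ ·)) : ℝ)
  have hterm : ∀ G ∈ s, iidExpect π (fun y => g (y i) * f (G.val.map y))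
      = if i ∈ G then scoreCorr π g f k else 0 := fun G hG => by
    split_ifs with hi
    · exact iidExpect_score_mul_of_mem hπ hi (hs G hG) k
    · exact iidExpect_score_mul_of_notMem hπ hg hi f
  have hpt : ∀ y : ι → Y, g (y i) * ∑ G ∈ s.filter (i ∈ ·),
      (f (G.val.map y) - b * ∑ G' ∈ s, f (G'.val.map y))
        = ∑ G ∈ s.filter (i ∈ ·), g (y i) * f (G.val.map y)
          - m * (b * ∑ G' ∈ s, g (y i) * f (G'.val.map y)) := fun y => by
    rw [sum_sub_distrib, sum_const, nsmul_eq_mul, ← mul_sum, ← mul_sum]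
    ring
  simp only [hpt]
  rw [iidExpect_sub, iidExpect_sum, iidExpect_const_mul, iidExpect_const_mul, iidExpect_sum,
    sum_congr rfl hterm, ← sum_filter,
    sum_congr rfl fun G hG => (hterm G (mem_filter.1 hG).1).trans (if_pos (mem_filter.1 hG).2),
    sum_const, nsmul_eq_mul]
  ring

end ScoreCorrelation

lemma Finset.card_filter_mem_powersetCard {α : Type*} [DecidableEq α] (s : Finset α) {a : α}
    (ha : a ∈ s) {n : ℕ} (hn : 1 ≤ n) :
    #((s.powersetCard n).filter (a ∈ ·)) = (#s - 1).choose (n - 1) := by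
  simpa using card_filter_powersetCard_subset {a} s n (by simpa using ha) (by simpa using hn)

theorem stmt_1_general {Y : Type*} [Fintype Y] (n N : ℕ) (hn : 1 ≤ n) (hN : n < N)
    (π : Y → ℝ) (hπ1 : ∑ y, π y = 1)
    (g : Y → ℝ) (hg : ∑ y, π y * g y = 0)
    (f : Multiset Y → ℝ) :
    (∑ y : Fin N → Y, (∏ i, π (y i)) *
      (∑ i : Fin N, g (y i) *
        (∑ G ∈ (Finset.powersetCard n (Finset.univ : Finset (Fin N))).filter
            (fun G => i ∈ G),
          (f (G.val.map y)
            - (1 / (N.choose n : ℝ)) *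
              ∑ G' ∈ Finset.powersetCard n (Finset.univ : Finset (Fin N)),
                f (G'.val.map y)))))
    = ((N.choose n : ℝ) - ((N - 1).choose (n - 1) : ℝ)) *
        ∑ z : Fin n → Y, (∏ j, π (z j)) *
          (f (Multiset.map z (Finset.univ : Finset (Fin n)).val) * ∑ j : Fin n, g (z j)) := by
  set P := powersetCard n (univ : Finset (Fin N))
  set C : ℝ := (N.choose n : ℝ)
  set c : ℝ := ((N - 1).choose (n - 1) : ℝ)
  have hcard : ∀ i : Fin N, (#(P.filter (i ∈ ·)) : ℝ) = c := fun i => by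
    simp [P, c, card_filter_mem_powersetCard _ (mem_univ i) hn]
  have hadv := iidExpect_score_mul_advantage (f := f) hπ1 hg P
    (fun G hG => by simpa using (mem_powersetCard.1 hG).2) (⟨0, hn⟩ : Fin n)
  have hchoose : (N : ℝ) * c = n * C := by
    have h := Nat.add_one_mul_choose_eq (N - 1) (n - 1)
    rw [Nat.sub_add_cancel (by omega), Nat.sub_add_cancel hn, mul_comm _ n] at h
    simp only [c, C]
    exact_mod_cast h
  have hC : C ≠ 0 := by simpa [C] using (Nat.choose_pos hN.le).ne'
  calc _ = ∑ i : Fin N, iidExpect π (fun y => g (y i) * ∑ G ∈ P.filter (i ∈ ·),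
        (f (G.val.map y) - 1 / C * ∑ G' ∈ P, f (G'.val.map y))) := by
        rw [← iidExpect_sum]; rfl
    _ = (C - c) * (n * scoreCorr π g f (⟨0, hn⟩ : Fin n)) := by
        simp only [hadv, hcard, sum_const, card_univ, Fintype.card_fin, nsmul_eq_mul]
        field_simp
        linear_combination (C - c) * scoreCorr π g f (⟨0, hn⟩ : Fin n) * hchoose
    _ = (C - c) * iidExpect π (fun z : Fin n → Y => f (univ.val.map z) * ∑ j, g (z j)) := by
        rw [iidExpect_mul_sum_score, Fintype.card_fin]

/-- Unbiasedness of the set-RL gradient estimator built from all C(N,n) subsets: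
with g playing the role of the score function ∇log π (zero mean under π), the
expected estimator equals (C(N,n) − C(N−1,n−1)) times the true set-RL gradient. -/
theorem stmt_1 {Y : Type*} [Fintype Y] (n N : ℕ) (hn : 1 ≤ n) (hN : n < N)
    (π : Y → ℝ) (hπ0 : ∀ y, 0 ≤ π y) (hπ1 : ∑ y, π y = 1)
    (g : Y → ℝ) (hg : ∑ y, π y * g y = 0)
    (f : Multiset Y → ℝ) :
    (∑ y : Fin N → Y, (∏ i, π (y i)) *
      (∑ i : Fin N, g (y i) *
        (∑ G ∈ (Finset.powersetCard n (Finset.univ : Finset (Fin N))).filter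
            (fun G => i ∈ G),
          (f (G.val.map y)
            - (1 / (N.choose n : ℝ)) *
              ∑ G' ∈ Finset.powersetCard n (Finset.univ : Finset (Fin N)),
                f (G'.val.map y)))))
    = ((N.choose n : ℝ) - ((N - 1).choose (n - 1) : ℝ)) *
        ∑ z : Fin n → Y, (∏ j, π (z j)) *
          (f (Multiset.map z (Finset.univ : Finset (Fin n)).val) * ∑ j : Fin n, g (z j)) :=
  stmt_1_general n N hn hN π hπ1 g hg f
end

section
/- Let Y₁,…,Y_n be i.i.d. from π, f symmetric, and g : Y → ℝ with E_π[g] = 0. Then E[f(Y₁,…,Y_n) · Σ_{i=1}^n g(Y_i)] = n · E_{y∼π}[g(y) · A_marg(y)], where A_marg(y) = E[f(y,Y₂,…,Y_n)] − E[f(Y₁,…,Y_n)]. -/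
/-!
The product weight and `f` are invariant under permuting coordinates, so every summand
`g (v i)` contributes as much as `g (v z)` for one fixed coordinate `z`; this gives the factor `n`.
Resampling coordinate `z` preserves the weight: the involution `(y, v) ↦ (v z, update v z y)` of
`Y × (ι → Y)` preserves `π y * ∏ i, π (v i)`, so `E[g(Y') f(Y with Y_z := Y')] = E[g(Y_z) f(Y)]`
for an independent copy `Y'`. The baseline `E[f]` drops out because `E_π[g] = 0`.
-/

open Finset Function

section

variable {ι Y R : Type*} [Fintype ι] [DecidableEq ι] [CommSemiring R]

theorem mul_prod_eq_mul_prod_update (π : Y → R) (v : ι → Y) (z : ι) (y : Y) :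
    π y * ∏ i, π (v i) = π (v z) * ∏ i, π (update v z y i) := by
  rw [← mul_prod_erase univ _ (mem_univ z), ← mul_prod_erase univ _ (mem_univ z),
    update_self, mul_left_comm]
  congr 2
  exact prod_congr rfl fun i hi => by rw [update_of_ne (ne_of_mem_erase hi)]

variable [Fintype Y]

theorem sum_prod_mul_comp_perm (π : Y → R) (σ : Equiv.Perm ι) (F : (ι → Y) → R) :
    ∑ v : ι → Y, (∏ i, π (v i)) * F (v ∘ σ) = ∑ v : ι → Y, (∏ i, π (v i)) * F v :=
  Fintype.sum_equiv (σ.symm.arrowCongr (Equiv.refl Y)) _ _ fun v =>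
    (congrArg (· * F (v ∘ σ)) (Equiv.prod_comp σ fun i => π (v i))).symm

theorem sum_prod_mul_mul_sum_eq_card_mul (π : Y → R) (f : (ι → Y) → R)
    (hf : ∀ (σ : Equiv.Perm ι) (v : ι → Y), f (v ∘ σ) = f v) (g : Y → R) (z : ι) :
    ∑ v : ι → Y, (∏ i, π (v i)) * (f v * ∑ i, g (v i))
      = Fintype.card ι * ∑ v : ι → Y, (∏ i, π (v i)) * (f v * g (v z)) := by
  have hswap (i : ι) : ∑ v : ι → Y, (∏ i, π (v i)) * (f v * g (v i))
      = ∑ v : ι → Y, (∏ i, π (v i)) * (f v * g (v z)) := by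
    rw [← sum_prod_mul_comp_perm π (Equiv.swap z i)]
    simp [hf]
  simp_rw [mul_sum (s := univ (α := ι))]
  rw [sum_comm]
  simp only [hswap, sum_const, card_univ, nsmul_eq_mul]

theorem sum_mul_sum_prod_mul_update (π : Y → R) (z : ι)
    (F : Y → (ι → Y) → R) :
    ∑ y, π y * ∑ v : ι → Y, (∏ i, π (v i)) * F y (update v z y)
      = (∑ y, π y) * ∑ v : ι → Y, (∏ i, π (v i)) * F (v z) v := by
  have hinv : Involutive fun p : Y × (ι → Y) => (p.2 z, update p.2 z p.1) := fun p => by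
    simp
  rw [sum_mul]
  simp only [mul_sum]
  rw [← Fintype.sum_prod_type', ← Fintype.sum_prod_type']
  refine Fintype.sum_bijective (M := R) _ hinv.bijective _ _ fun p => ?_
  simp only [update_self, ← mul_assoc]
  rw [mul_prod_eq_mul_prod_update π p.2 z p.1]

end

theorem stmt_16_general {Y : Type*} [Fintype Y] (n : ℕ) (hn : 0 < n)
    (π : Y → ℝ) (hπ1 : ∑ u, π u = 1)
    (g : Y → ℝ) (hg : ∑ u, π u * g u = 0)
    (f : (Fin n → Y) → ℝ)
    (hsymm : ∀ (σ : Equiv.Perm (Fin n)) (v : Fin n → Y), f (v ∘ σ) = f v) :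
    ∑ v : Fin n → Y, (∏ i, π (v i)) * (f v * ∑ i, g (v i))
      = (n : ℝ) * ∑ y : Y, π y * (g y *
          ((∑ v : Fin n → Y, (∏ i, π (v i)) * f (Function.update v ⟨0, hn⟩ y))
            - ∑ v : Fin n → Y, (∏ i, π (v i)) * f v)) := by
  set z : Fin n := ⟨0, hn⟩
  have hbaseline (A : Y → ℝ) (E : ℝ) :
      ∑ y, π y * (g y * (A y - E)) = ∑ y, π y * (g y * A y) := by
    simp only [mul_sub, sum_sub_distrib, ← mul_assoc, ← sum_mul, hg, zero_mul, sub_zero]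
  rw [sum_prod_mul_mul_sum_eq_card_mul π f hsymm g z, Fintype.card_fin, hbaseline]
  congr 1
  calc ∑ v : Fin n → Y, (∏ i, π (v i)) * (f v * g (v z))
      = (∑ y, π y) * ∑ v : Fin n → Y, (∏ i, π (v i)) * (g (v z) * f v) := by
        simp only [hπ1, one_mul, mul_comm (f _)]
    _ = ∑ y, π y * ∑ v : Fin n → Y, (∏ i, π (v i)) * (g y * f (update v z y)) :=
        (sum_mul_sum_prod_mul_update π z fun y w => g y * f w).symm
    _ = ∑ y, π y * (g y * ∑ v : Fin n → Y, (∏ i, π (v i)) * f (update v z y)) := by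
        simp only [mul_sum, mul_left_comm (g _)]

/-- The set-RL policy gradient equals n times the standard policy gradient with
the marginal set advantage A_marg(y) = E[f(y,Y₂,…,Y_n)] − E[f(Y₁,…,Y_n)]. -/
theorem stmt_16 {Y : Type*} [Fintype Y] (n : ℕ) (hn : 0 < n)
    (π : Y → ℝ) (hπ0 : ∀ u, 0 ≤ π u) (hπ1 : ∑ u, π u = 1)
    (g : Y → ℝ) (hg : ∑ u, π u * g u = 0)
    (f : (Fin n → Y) → ℝ)
    (hsymm : ∀ (σ : Equiv.Perm (Fin n)) (v : Fin n → Y), f (v ∘ σ) = f v) :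
    ∑ v : Fin n → Y, (∏ i, π (v i)) * (f v * ∑ i, g (v i))
      = (n : ℝ) * ∑ y : Y, π y * (g y *
          ((∑ v : Fin n → Y, (∏ i, π (v i)) * f (Function.update v ⟨0, hn⟩ y))
            - ∑ v : Fin n → Y, (∏ i, π (v i)) * f v)) :=
  stmt_16_general n hn π hπ1 g hg f hsymm
end
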